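/- arXiv:1910.12255 — 2 statements merged into one kernel-verified Lean document; each statement's English description precedes it below -/
import Mathlib

section
/- Let X_i, X_j be real random variables on a common probability space such that the pair (X_i, X_j) is associated, let A > 0 and α ∈ (0,2). Then, with values in [0, +∞], I^A_α(X_i, X_j) ≤ √(I^A_α(X_i, X_i)) · √(I^A_α(X_j, X_j)). -/
open MeasureTheory Filter Topology

noncomputable section

namespace Paper

variable {Ω : Type*} [MeasurableSpace Ω]

/-- Partial sum `S_n = X_1 + … + X_n` (1-based indexing). -/
def partialSum (X : ℕ → Ω → ℝ) (n : ℕ) (ω : Ω) : ℝ := ∑ j ∈ Finset.Icc 1 n, X j ω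

/-- The law of the random vector `(X_1, …, X_N)`. -/
def lawVec (P : Measure Ω) (X : ℕ → Ω → ℝ) (N : ℕ) : Measure (Fin N → ℝ) :=
  P.map (fun ω (i : Fin N) => X (1 + (i : ℕ)) ω)

/-- Strict stationarity: `(X_{1+k},…,X_{N+k}) ~ (X_1,…,X_N)` for all `k, N`. -/
def StrictlyStationary (P : Measure Ω) (X : ℕ → Ω → ℝ) : Prop :=
  ∀ k N : ℕ, P.map (fun ω (i : Fin N) => X (1 + k + (i : ℕ)) ω) = lawVec P X N

/-- Covariance (as a formula `E[fg] − E[f]E[g]`). -/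
def cov (P : Measure Ω) (f g : Ω → ℝ) : ℝ :=
  (∫ ω, f ω * g ω ∂P) - (∫ ω, f ω ∂P) * (∫ ω, g ω ∂P)

/-- Bounded measurable functions that are non-decreasing in each coordinate. -/
def BddMono {n : ℕ} (f : (Fin n → ℝ) → ℝ) : Prop :=
  Measurable f ∧ (∃ C, ∀ x, |f x| ≤ C) ∧
    ∀ x y : Fin n → ℝ, (∀ i, x i ≤ y i) → f x ≤ f y

/-- Association of a finite random vector. -/
def AssociatedVec (P : Measure Ω) {n : ℕ} (V : Ω → Fin n → ℝ) : Prop :=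
  ∀ f g : (Fin n → ℝ) → ℝ, BddMono f → BddMono g →
    0 ≤ cov P (fun ω => f (V ω)) (fun ω => g (V ω))

/-- Association of a sequence: every finite subcollection is associated. -/
def AssociatedSeq (P : Measure Ω) (X : ℕ → Ω → ℝ) : Prop :=
  ∀ (n : ℕ) (idx : Fin n → ℕ), (∀ i, 1 ≤ idx i) → StrictMono idx →
    AssociatedVec P (fun ω i => X (idx i) ω)

/-- Association of a pair of random variables. -/
def AssociatedPair (P : Measure Ω) (Y Z : Ω → ℝ) : Prop :=
  AssociatedVec P (fun ω => ![Y ω, Z ω])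

/-- Convolution of two measures on an additive monoid. -/
def mconv {E : Type*} [MeasurableSpace E] [Add E] (μ ν : Measure E) : Measure E :=
  (μ.prod ν).map (fun p => p.1 + p.2)

/-- `μ` is an `α`-stable law: `a X' + b X'' ~ (a^α+b^α)^{1/α} X + d`. -/
def IsStableLaw {E : Type*} [MeasurableSpace E] [AddCommGroup E] [Module ℝ E]
    (α : ℝ) (μ : Measure E) : Prop :=
  ∀ a b : ℝ, 0 < a → 0 < b → ∃ d : E,
    mconv (μ.map (fun x => a • x)) (μ.map (fun x => b • x))
      = μ.map (fun x => (a ^ α + b ^ α) ^ (1 / α) • x + d)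

/-- `μ` is a strictly `α`-stable law. -/
def IsStrictlyStableLaw {E : Type*} [MeasurableSpace E] [AddCommGroup E] [Module ℝ E]
    (α : ℝ) (μ : Measure E) : Prop :=
  ∀ a b : ℝ, 0 < a → 0 < b →
    mconv (μ.map (fun x => a • x)) (μ.map (fun x => b • x))
      = μ.map (fun x => (a ^ α + b ^ α) ^ (1 / α) • x)

/-- A sequence is jointly `α`-stable if all finite-dimensional laws are `α`-stable. -/
def JointlyStable (P : Measure Ω) (X : ℕ → Ω → ℝ) (α : ℝ) : Prop :=
  ∀ N : ℕ, IsStableLaw α (lawVec P X N)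

/-- Convergence in distribution, via bounded continuous test functions. -/
def TendstoInDistribution {E : Type*} [MeasurableSpace E] [TopologicalSpace E]
    (P : Measure Ω) (Y : ℕ → Ω → E) (μ : Measure E) : Prop :=
  ∀ f : BoundedContinuousFunction E ℝ,
    Tendsto (fun n => ∫ ω, f (Y n ω) ∂P) atTop (𝓝 (∫ x, f x ∂μ))

/-- The truncation `f_a`. -/
def trunc (a x : ℝ) : ℝ := max (-a) (min a x)

/-- Regular variation at `+∞` with index `ρ`. -/
def RegularlyVarying (g : ℝ → ℝ) (ρ : ℝ) : Prop :=
  (∀ᶠ x in atTop, 0 < g x) ∧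
    ∀ c : ℝ, 0 < c → Tendsto (fun x => g (c * x) / g x) atTop (𝓝 (c ^ ρ))

/-- The Hoeffding function `H_{(Y,Z)}(x,y) = P(Y≤x, Z≤y) − P(Y≤x)P(Z≤y)`. -/
def Hfun (P : Measure Ω) (Y Z : Ω → ℝ) (x y : ℝ) : ℝ :=
  (P {ω | Y ω ≤ x ∧ Z ω ≤ y}).toReal -
    (P {ω | Y ω ≤ x}).toReal * (P {ω | Z ω ≤ y}).toReal

/-- A Lévy measure: no mass at `0` and `∫ min(‖x‖²,1) dν < ∞`. -/
def IsLevyMeasure {E : Type*} [MeasurableSpace E] [NormedAddCommGroup E]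
    (ν : Measure E) : Prop :=
  ν {0} = 0 ∧ (∫⁻ x, ENNReal.ofReal (min (‖x‖ ^ 2) 1) ∂ν) < ⊤

/-- `n E[h(V_n)] → ∫ h dν` for bounded continuous `h` vanishing near `0`. -/
def SmallVagueTendsto {E : Type*} [MeasurableSpace E] [NormedAddCommGroup E]
    (P : Measure Ω) (V : ℕ → Ω → E) (ν : Measure E) : Prop :=
  ∀ h : E → ℝ, Continuous h → (∃ C, ∀ x, |h x| ≤ C) →
    (∃ ε > 0, ∀ x, ‖x‖ < ε → h x = 0) →
    Tendsto (fun n : ℕ => (n : ℝ) * ∫ ω, h (V n ω) ∂P) atTop (𝓝 (∫ x, h x ∂ν))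

/-- Standing assumptions (A1)–(A4). -/
structure Standing (P : Measure Ω) (X : ℕ → Ω → ℝ) (α : ℝ) (B : ℕ → ℝ)
    (ν : (N : ℕ) → Measure (Fin N → ℝ)) : Prop where
  meas : ∀ j, Measurable (X j)
  alpha_pos : 0 < α
  alpha_lt_two : α < 2
  tail : ∃ ℓ : ℝ → ℝ, RegularlyVarying ℓ 0 ∧
    ∀ x : ℝ, 0 < x → (P {ω | x < |X 1 ω|}).toReal = x ^ (-α) * ℓ x
  B_pos : ∀ n, 0 < B n
  B_norm : Tendsto (fun n : ℕ => (n : ℝ) * (P {ω | B n < |X 1 ω|}).toReal) atTop (𝓝 1)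
  levy : ∀ N, IsLevyMeasure (ν N)
  vague : ∀ N : ℕ, SmallVagueTendsto P (fun n ω (i : Fin N) => X (1 + (i : ℕ)) ω / B n) (ν N)
  symm : α = 1 → ∀ N, lawVec P X N = P.map (fun ω (i : Fin N) => -X (1 + (i : ℕ)) ω)
  mean_zero : 1 < α → Integrable (X 1) P ∧ (∫ ω, X 1 ω ∂P) = 0

/-- The limit measures `ν_{{1,j}}` for the pairs `(X_1, X_j)`. -/
def PairLevy (P : Measure Ω) (X : ℕ → Ω → ℝ) (B : ℕ → ℝ)
    (ν2 : ℕ → Measure (ℝ × ℝ)) : Prop :=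
  ∀ j : ℕ, 2 ≤ j → IsLevyMeasure (ν2 j) ∧
    SmallVagueTendsto P (fun n ω => (X 1 ω / B n, X j ω / B n)) (ν2 j)

/-- Assumption (A5). -/
def SumCovAssumption (P : Measure Ω) (X : ℕ → Ω → ℝ) (B : ℕ → ℝ)
    (ν2 : ℕ → Measure (ℝ × ℝ)) : Prop :=
  (∀ a : ℝ, 0 < a → Summable (fun j : ℕ =>
      cov P (fun ω => trunc a (X 1 ω)) (fun ω => trunc a (X (j + 2) ω)))) ∧
  (∃ ρ : ℝ, RegularlyVarying (fun a => ∑' j : ℕ,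
      cov P (fun ω => trunc a (X 1 ω)) (fun ω => trunc a (X (j + 2) ω))) ρ) ∧
  Summable (fun j : ℕ => ∫ p : ℝ × ℝ, trunc 1 p.1 * trunc 1 p.2 ∂(ν2 (j + 2))) ∧
  Tendsto (fun n : ℕ => (n : ℝ) * ∑' j : ℕ,
      cov P (fun ω => trunc 1 (X 1 ω / B n)) (fun ω => trunc 1 (X (j + 2) ω / B n)))
    atTop (𝓝 (∑' j : ℕ, ∫ p : ℝ × ℝ, trunc 1 p.1 * trunc 1 p.2 ∂(ν2 (j + 2))))


/-- The coefficient `I^A_α(Y,Z) = sup_{a ≥ A} a^{α−2} ∫_{−a}^{a}∫_{−a}^{a} H_{(Y,Z)}(x,y) dx dy`,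
with values in `[0,∞]`. -/
def Icoef {Ω : Type*} [MeasurableSpace Ω] (P : Measure Ω) (Y Z : Ω → ℝ) (A α : ℝ) : ENNReal :=
  ⨆ a : {a : ℝ // A ≤ a}, ENNReal.ofReal ((a : ℝ) ^ (α - 2)) *
    ∫⁻ x in Set.Ioc (-(a : ℝ)) (a : ℝ), ∫⁻ y in Set.Ioc (-(a : ℝ)) (a : ℝ),
      ENNReal.ofReal (Hfun P Y Z x y)

/-!
Hoeffding's identity: for `a ≥ 0`,
`∫∫_{(-a,a]²} H_{(Y,Z)}(x,y) dx dy = Cov(f_a(Y), f_a(Z))` with `f_a = trunc a`, because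
`a - f_a(t) = ∫_{(-a,a]} 1{t ≤ x} dx`, `H_{(Y,Z)}(x,y) = Cov(1{Y ≤ x}, 1{Z ≤ y})`, and a covariance
commutes with integration in a parameter. Association makes `H_{(X_i,X_j)} ≥ 0`, and
`H_{(Y,Y)} ≥ 0` always, so the three double `lintegral`s in `I^A_α` are `Cov(f_a(X_i), f_a(X_j))`,
`Var f_a(X_i)` and `Var f_a(X_j)`. Cauchy–Schwarz for the covariance bounds each term of the
supremum defining `I^A_α(X_i, X_j)`, the weight `a^{α-2}` splitting evenly between the two square
roots.
-/

lemma continuous_trunc (a : ℝ) : Continuous (trunc a) :=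
  continuous_const.max (continuous_const.min continuous_id)

lemma abs_trunc_le {a : ℝ} (ha : 0 ≤ a) (t : ℝ) : |trunc a t| ≤ a :=
  abs_le.2 ⟨le_max_left _ _, max_le (by linarith) (min_le_left _ _)⟩

lemma integral_Ioc_indicator_Ici {a : ℝ} (ha : 0 ≤ a) (t : ℝ) :
    ∫ x in Set.Ioc (-a) a, (Set.Ici t).indicator 1 x = a - trunc a t := by
  rw [integral_indicator_one measurableSet_Ici, Measure.real_def,
    Measure.restrict_apply measurableSet_Ici, Set.inter_comm,
    measure_congr (μ := volume) ((ae_eq_refl _).inter Ioi_ae_eq_Ici.symm), Set.Ioc_inter_Ioi,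
    Real.volume_Ioc, ENNReal.toReal_ofReal']
  unfold trunc
  grind

section Covariance

open ProbabilityTheory

variable {ι : Type*} [MeasurableSpace ι] {P : Measure Ω} {ρ : Measure ι}

lemma covariance_eq_integral_mul_sub [IsProbabilityMeasure P] {X Y : Ω → ℝ}
    (hX : MemLp X 2 P) (hY : MemLp Y 2 P) :
    cov[X, Y; P] = ∫ ω, X ω * (Y ω - P[Y]) ∂P := by
  have hY₁ : Integrable Y P := hY.integrable one_le_two
  have hYc : Integrable (fun ω ↦ Y ω - P[Y]) P := hY₁.sub (integrable_const _)
  have hXYc : Integrable (fun ω ↦ X ω * (Y ω - P[Y])) P :=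
    hX.integrable_mul (hY.sub (memLp_const _))
  simp_rw [covariance, sub_mul]
  rw [integral_sub hXYc (hYc.const_mul _), integral_const_mul,
    integral_sub hY₁ (integrable_const _), integral_const, probReal_univ, one_smul, sub_self,
    mul_zero, sub_zero]

lemma integral_covariance_left [IsProbabilityMeasure P] [IsFiniteMeasure ρ]
    {U : ι → Ω → ℝ} (hU : Measurable (Function.uncurry U)) {C : ℝ} (hUC : ∀ x ω, |U x ω| ≤ C)
    {W : Ω → ℝ} (hW : MemLp W 2 P) :
    ∫ x, cov[U x, W; P] ∂ρ = cov[fun ω ↦ ∫ x, U x ω ∂ρ, W; P] := by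
  have hUx : ∀ x, MemLp (U x) 2 P := fun x ↦
    .of_bound (hU.comp measurable_prodMk_left).aestronglyMeasurable C (ae_of_all _ (hUC x))
  have hV : MemLp (fun ω ↦ ∫ x, U x ω ∂ρ) 2 P :=
    .of_bound hU.stronglyMeasurable.integral_prod_left.aestronglyMeasurable (C * ρ.real Set.univ)
      (ae_of_all _ fun ω ↦ norm_integral_le_of_norm_le_const (ae_of_all _ fun x ↦ hUC x ω))
  have hint : Integrable (fun p : ι × Ω ↦ U p.1 p.2 * (W p.2 - P[W])) (ρ.prod P) :=
    (((hW.integrable one_le_two).sub (integrable_const _)).comp_snd ρ).bdd_mul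
      hU.aestronglyMeasurable (ae_of_all _ fun p ↦ hUC p.1 p.2)
  simp_rw [covariance_eq_integral_mul_sub (hUx _) hW, covariance_eq_integral_mul_sub hV hW,
    ← integral_mul_const]
  exact integral_integral_swap hint

lemma covariance_le_sqrt_variance_mul_sqrt_variance [IsFiniteMeasure P] {X Y : Ω → ℝ}
    (hX : MemLp X 2 P) (hY : MemLp Y 2 P) :
    cov[X, Y; P] ≤ √Var[X; P] * √Var[Y; P] := by
  have hcentered : ∀ {Z : Ω → ℝ}, MemLp Z 2 P → MemLp (fun ω ↦ Z ω - P[Z]) (.ofReal 2) P :=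
    fun hZ ↦ by rw [ENNReal.ofReal_ofNat]; exact hZ.sub (memLp_const _)
  have hnorm_rpow : ∀ t : ℝ, ‖t‖ ^ (2 : ℝ) = t ^ 2 := fun t ↦ by
    rw [Real.rpow_two, Real.norm_eq_abs, sq_abs]
  calc cov[X, Y; P] ≤ ∫ ω, ‖X ω - P[X]‖ * ‖Y ω - P[Y]‖ ∂P := by
        refine integral_mono (hX.sub (memLp_const _) |>.integrable_mul (hY.sub (memLp_const _)))
          ((hX.sub (memLp_const _)).norm.integrable_mul (hY.sub (memLp_const _)).norm)
          fun ω ↦ ?_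
        simp only [Real.norm_eq_abs, ← abs_mul]
        exact le_abs_self _
    _ ≤ (∫ ω, ‖X ω - P[X]‖ ^ (2 : ℝ) ∂P) ^ (1 / 2 : ℝ) *
          (∫ ω, ‖Y ω - P[Y]‖ ^ (2 : ℝ) ∂P) ^ (1 / 2 : ℝ) :=
        integral_mul_norm_le_Lp_mul_Lq Real.HolderConjugate.two_two (hcentered hX) (hcentered hY)
    _ = √Var[X; P] * √Var[Y; P] := by
        simp_rw [hnorm_rpow, variance_eq_integral hX.aemeasurable,
          variance_eq_integral hY.aemeasurable, Real.sqrt_eq_rpow]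

lemma ofReal_covariance_le_rpow_half [IsFiniteMeasure P] {X Y : Ω → ℝ}
    (hX : MemLp X 2 P) (hY : MemLp Y 2 P) :
    ENNReal.ofReal cov[X, Y; P] ≤
      ENNReal.ofReal cov[X, X; P] ^ (1 / 2 : ℝ) * ENNReal.ofReal cov[Y, Y; P] ^ (1 / 2 : ℝ) := by
  rw [covariance_self hX.aemeasurable, covariance_self hY.aemeasurable,
    ENNReal.ofReal_rpow_of_nonneg (variance_nonneg _ _) (by norm_num),
    ENNReal.ofReal_rpow_of_nonneg (variance_nonneg _ _) (by norm_num),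
    ← ENNReal.ofReal_mul (Real.rpow_nonneg (variance_nonneg _ _) _), ← Real.sqrt_eq_rpow,
    ← Real.sqrt_eq_rpow]
  exact ENNReal.ofReal_le_ofReal (covariance_le_sqrt_variance_mul_sqrt_variance hX hY)

end Covariance

section HoeffdingFunction

open ProbabilityTheory

variable {P : Measure Ω}

lemma measurable_Hfun [SFinite P] {Y Z : Ω → ℝ} (hY : Measurable Y) (hZ : Measurable Z) :
    Measurable (Function.uncurry (Hfun P Y Z)) := by
  have hprob : ∀ {s : Set ((ℝ × ℝ) × Ω)}, MeasurableSet s →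
      Measurable fun p ↦ (P (Prod.mk p ⁻¹' s)).toReal :=
    fun hs ↦ (measurable_measure_prodMk_left hs).ennreal_toReal
  have hY' : MeasurableSet {q : (ℝ × ℝ) × Ω | Y q.2 ≤ q.1.1} :=
    measurableSet_le (hY.comp measurable_snd) (measurable_fst.comp measurable_fst)
  have hZ' : MeasurableSet {q : (ℝ × ℝ) × Ω | Z q.2 ≤ q.1.2} :=
    measurableSet_le (hZ.comp measurable_snd) (measurable_snd.comp measurable_fst)
  exact (hprob (hY'.inter hZ')).sub ((hprob hY').mul (hprob hZ'))

lemma bddMono_neg_indicator_Iic {n : ℕ} (i : Fin n) (x : ℝ) :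
    BddMono fun v : Fin n → ℝ ↦ -(Set.Iic x).indicator 1 (v i) := by
  refine ⟨((measurable_const.indicator measurableSet_Iic).comp (measurable_pi_apply i)).neg,
    ⟨1, fun v ↦ ?_⟩, fun v w hvw ↦ ?_⟩
  · by_cases h : v i ≤ x <;> simp [h]
  · by_cases h : w i ≤ x
    · simp [h, (hvw i).trans h]
    · by_cases h' : v i ≤ x <;> simp [h, h']

variable [IsProbabilityMeasure P]

lemma Hfun_le_one (Y Z : Ω → ℝ) (x y : ℝ) : Hfun P Y Z x y ≤ 1 :=
  (sub_le_self _ (mul_nonneg ENNReal.toReal_nonneg ENNReal.toReal_nonneg)).trans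
    measureReal_le_one

lemma Hfun_self_nonneg (Y : Ω → ℝ) (x y : ℝ) : 0 ≤ Hfun P Y Y x y := by
  wlog hxy : x ≤ y generalizing x y
  · simpa only [Hfun, and_comm, mul_comm] using this y x (le_of_not_ge hxy)
  have hinter : {ω | Y ω ≤ x ∧ Y ω ≤ y} = {ω | Y ω ≤ x} := by
    ext ω
    simpa using fun h ↦ h.trans hxy
  rw [Hfun, hinter]
  exact sub_nonneg.2 (mul_le_of_le_one_right ENNReal.toReal_nonneg measureReal_le_one)

lemma Hfun_eq_covariance {Y Z : Ω → ℝ} (hY : Measurable Y) (hZ : Measurable Z) (x y : ℝ) :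
    Hfun P Y Z x y =
      cov[(Y ⁻¹' Set.Iic x).indicator 1, (Z ⁻¹' Set.Iic y).indicator 1; P] := by
  have hYx : MeasurableSet (Y ⁻¹' Set.Iic x) := hY measurableSet_Iic
  have hZy : MeasurableSet (Z ⁻¹' Set.Iic y) := hZ measurableSet_Iic
  have hYx₂ : MemLp ((Y ⁻¹' Set.Iic x).indicator (1 : Ω → ℝ)) 2 P :=
    (memLp_const (1 : ℝ)).indicator hYx
  have hZy₂ : MemLp ((Z ⁻¹' Set.Iic y).indicator (1 : Ω → ℝ)) 2 P :=
    (memLp_const (1 : ℝ)).indicator hZy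
  rw [covariance_eq_sub hYx₂ hZy₂, ← Set.inter_indicator_one,
    integral_indicator_one (hYx.inter hZy), integral_indicator_one hYx,
    integral_indicator_one hZy]
  rfl

lemma Hfun_nonneg_of_associatedPair {Y Z : Ω → ℝ} (hY : Measurable Y) (hZ : Measurable Z)
    (h : AssociatedPair P Y Z) (x y : ℝ) : 0 ≤ Hfun P Y Z x y := by
  have hL2 : ∀ {V : Ω → ℝ}, Measurable V → ∀ x,
      MemLp (fun ω ↦ -(V ⁻¹' Set.Iic x).indicator (1 : Ω → ℝ) ω) 2 P :=
    fun hV x ↦ ((memLp_const (1 : ℝ)).indicator (hV measurableSet_Iic)).neg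
  rw [Hfun_eq_covariance hY hZ, ← neg_neg cov[_, _; P], ← covariance_fun_neg_left,
    ← covariance_fun_neg_right, covariance_eq_sub (hL2 hY x) (hL2 hZ y)]
  exact h _ _ (bddMono_neg_indicator_Iic 0 x) (bddMono_neg_indicator_Iic 1 y)

end HoeffdingFunction

section HoeffdingIdentity

open ProbabilityTheory

variable {P : Measure Ω}

lemma memLp_trunc_comp [IsFiniteMeasure P] {a : ℝ} (ha : 0 ≤ a) {Y : Ω → ℝ} (hY : Measurable Y)
    (p : ENNReal) : MemLp (fun ω ↦ trunc a (Y ω)) p P :=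
  .of_bound ((continuous_trunc a).measurable.comp hY).aestronglyMeasurable a
    (ae_of_all _ fun ω ↦ abs_trunc_le ha (Y ω))

variable [IsProbabilityMeasure P]

lemma integral_integral_Hfun {Y Z : Ω → ℝ} (hY : Measurable Y) (hZ : Measurable Z)
    {a : ℝ} (ha : 0 ≤ a) :
    ∫ x in Set.Ioc (-a) a, ∫ y in Set.Ioc (-a) a, Hfun P Y Z x y =
      cov[fun ω ↦ trunc a (Y ω), fun ω ↦ trunc a (Z ω); P] := by
  have hmeas : ∀ {V : Ω → ℝ}, Measurable V →
      Measurable (Function.uncurry fun x ↦ (V ⁻¹' Set.Iic x).indicator (1 : Ω → ℝ)) :=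
    fun hV ↦ measurable_const.indicator (measurableSet_le (hV.comp measurable_snd) measurable_fst)
  have hbound : ∀ (V : Ω → ℝ) x ω, |(V ⁻¹' Set.Iic x).indicator (1 : Ω → ℝ) ω| ≤ 1 :=
    fun V x ω ↦ by by_cases h : ω ∈ V ⁻¹' Set.Iic x <;> simp [h]
  have hL2 : ∀ {V : Ω → ℝ}, Measurable V → ∀ x,
      MemLp ((V ⁻¹' Set.Iic x).indicator (1 : Ω → ℝ)) 2 P :=
    fun hV x ↦ (memLp_const (1 : ℝ)).indicator (hV measurableSet_Iic)
  have hsection : ∀ (V : Ω → ℝ) ω,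
      ∫ x in Set.Ioc (-a) a, (V ⁻¹' Set.Iic x).indicator (1 : Ω → ℝ) ω = a - trunc a (V ω) :=
    fun V ω ↦ integral_Ioc_indicator_Ici ha (V ω)
  have hcompl : ∀ {V : Ω → ℝ}, Measurable V → MemLp (fun ω ↦ a - trunc a (V ω)) 2 P :=
    fun hV ↦ (memLp_const a).sub (memLp_trunc_comp ha hV 2)
  calc ∫ x in Set.Ioc (-a) a, ∫ y in Set.Ioc (-a) a, Hfun P Y Z x y
      = ∫ x in Set.Ioc (-a) a,
          cov[(Y ⁻¹' Set.Iic x).indicator 1, fun ω ↦ a - trunc a (Z ω); P] := by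
        refine integral_congr_ae (ae_of_all _ fun x ↦ ?_)
        simp_rw [Hfun_eq_covariance hY hZ, covariance_comm ((Y ⁻¹' Set.Iic x).indicator 1)]
        rw [integral_covariance_left (hmeas hZ) (hbound Z) (hL2 hY x)]
        simp_rw [hsection]
    _ = cov[fun ω ↦ a - trunc a (Y ω), fun ω ↦ a - trunc a (Z ω); P] := by
        rw [integral_covariance_left (hmeas hY) (hbound Y) (hcompl hZ)]
        simp_rw [hsection]
    _ = cov[fun ω ↦ trunc a (Y ω), fun ω ↦ trunc a (Z ω); P] := by
        rw [covariance_const_sub_left (memLp_one_iff_integrable.1 (memLp_trunc_comp ha hY 1)),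
          covariance_const_sub_right (memLp_one_iff_integrable.1 (memLp_trunc_comp ha hZ 1)),
          neg_neg]

lemma lintegral_ofReal_Hfun {Y Z : Ω → ℝ} (hY : Measurable Y) (hZ : Measurable Z)
    (hH : ∀ x y, 0 ≤ Hfun P Y Z x y) {a : ℝ} (ha : 0 ≤ a) :
    ∫⁻ x in Set.Ioc (-a) a, ∫⁻ y in Set.Ioc (-a) a, ENNReal.ofReal (Hfun P Y Z x y) =
      ENNReal.ofReal cov[fun ω ↦ trunc a (Y ω), fun ω ↦ trunc a (Z ω); P] := by
  have hint : Integrable (Function.uncurry (Hfun P Y Z))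
      ((volume.restrict (Set.Ioc (-a) a)).prod (volume.restrict (Set.Ioc (-a) a))) :=
    .of_bound (measurable_Hfun hY hZ).aestronglyMeasurable 1 (ae_of_all _ fun p ↦
      show ‖Hfun P Y Z p.1 p.2‖ ≤ 1 by
        rw [Real.norm_eq_abs, abs_of_nonneg (hH p.1 p.2)]
        exact Hfun_le_one Y Z p.1 p.2)
  have hint_left : Integrable (fun x ↦ ∫ y in Set.Ioc (-a) a, Hfun P Y Z x y)
      (volume.restrict (Set.Ioc (-a) a)) := hint.integral_prod_left
  rw [← integral_integral_Hfun hY hZ ha, ofReal_integral_eq_lintegral_ofReal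
    hint_left (ae_of_all _ fun x ↦ integral_nonneg (hH x))]
  exact lintegral_congr_ae (hint.prod_right_ae.mono fun x hx ↦
    (ofReal_integral_eq_lintegral_ofReal hx (ae_of_all _ (hH x))).symm)

lemma lintegral_ofReal_Hfun_le {Y Z : Ω → ℝ} (hY : Measurable Y) (hZ : Measurable Z)
    (h : AssociatedPair P Y Z) {a : ℝ} (ha : 0 ≤ a) :
    ∫⁻ x in Set.Ioc (-a) a, ∫⁻ y in Set.Ioc (-a) a, ENNReal.ofReal (Hfun P Y Z x y) ≤
      (∫⁻ x in Set.Ioc (-a) a, ∫⁻ y in Set.Ioc (-a) a,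
        ENNReal.ofReal (Hfun P Y Y x y)) ^ (1 / 2 : ℝ) *
      (∫⁻ x in Set.Ioc (-a) a, ∫⁻ y in Set.Ioc (-a) a,
        ENNReal.ofReal (Hfun P Z Z x y)) ^ (1 / 2 : ℝ) := by
  rw [lintegral_ofReal_Hfun hY hZ (Hfun_nonneg_of_associatedPair hY hZ h) ha,
    lintegral_ofReal_Hfun hY hY (Hfun_self_nonneg Y) ha,
    lintegral_ofReal_Hfun hZ hZ (Hfun_self_nonneg Z) ha]
  exact ofReal_covariance_le_rpow_half (memLp_trunc_comp ha hY 2) (memLp_trunc_comp ha hZ 2)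

end HoeffdingIdentity

lemma ENNReal.mul_rpow_half_mul_rpow_half (w x y : ENNReal) :
    w * (x ^ (1 / 2 : ℝ) * y ^ (1 / 2 : ℝ)) = (w * x) ^ (1 / 2 : ℝ) * (w * y) ^ (1 / 2 : ℝ) := by
  rw [ENNReal.mul_rpow_of_nonneg _ _ (by norm_num), ENNReal.mul_rpow_of_nonneg _ _ (by norm_num),
    mul_mul_mul_comm, ← ENNReal.rpow_add_of_nonneg _ _ (by norm_num) (by norm_num)]
  norm_num

theorem statement6_general {Ω : Type*} [MeasurableSpace Ω] (P : Measure Ω) [IsProbabilityMeasure P]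
    (Xi Xj : Ω → ℝ) (hmi : Measurable Xi) (hmj : Measurable Xj)
    (hassoc : AssociatedPair P Xi Xj)
    (A α : ℝ) (hA : 0 < A) :
    Icoef P Xi Xj A α ≤ Icoef P Xi Xi A α ^ (1 / 2 : ℝ) * Icoef P Xj Xj A α ^ (1 / 2 : ℝ) := by
  refine iSup_le fun ⟨a, hAa⟩ ↦ ?_
  grw [lintegral_ofReal_Hfun_le hmi hmj hassoc (hA.le.trans hAa),
    ENNReal.mul_rpow_half_mul_rpow_half]
  gcongr <;> exact le_iSup_of_le ⟨a, hAa⟩ le_rfl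

/-- Cauchy–Schwarz inequality for the coefficient `I^A_α`. -/
theorem statement6 {Ω : Type*} [MeasurableSpace Ω] (P : Measure Ω) [IsProbabilityMeasure P]
    (Xi Xj : Ω → ℝ) (hmi : Measurable Xi) (hmj : Measurable Xj)
    (hassoc : AssociatedPair P Xi Xj)
    (A α : ℝ) (hA : 0 < A) (hα0 : 0 < α) (hα2 : α < 2) :
    Icoef P Xi Xj A α ≤ Icoef P Xi Xi A α ^ (1 / 2 : ℝ) * Icoef P Xj Xj A α ^ (1 / 2 : ℝ) :=
  statement6_general P Xi Xj hmi hmj hassoc A α hA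

end Paper
end
end

section
/- Let X_i, X_j be real random variables on a common probability space and let a > 0. Then Cov( f_a(X_i), f_a(X_j) ) = ∫_{−a}^{a} ∫_{−a}^{a} H_{(X_i,X_j)}(x,y) dx dy, where both sides are well-defined (f_a(X_i), f_a(X_j) are bounded and H_{(X_i,X_j)} is bounded). -/
open MeasureTheory Filter Topology

noncomputable section

namespace Paper

variable {Ω : Type*} [MeasurableSpace Ω]

/-! Hoeffding's formula. Since `f_a(t) + a` is the Lebesgue measure of `(-a, a] ∩ (-∞, t)` and
covariance ignores additive constants, `E[(f_a(X_i) + a)(f_a(X_j) + a)]` and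
`E[f_a(X_i) + a] E[f_a(X_j) + a]` become, by Fubini, integrals over `(-a, a]²` of
`P(x < X_i, y < X_j)` and `P(x < X_i) P(y < X_j)`; by inclusion–exclusion their difference is
`H_{(X_i,X_j)}(x, y)`. -/

open Set ProbabilityTheory

lemma trunc_eq_measureReal_Iio_sub {a : ℝ} (ha : 0 ≤ a) (t : ℝ) :
    trunc a t = (volume.restrict (Ioc (-a) a)).real (Iio t) - a := by
  rw [← Measure.restrict_congr_set Ioo_ae_eq_Ioc, measureReal_restrict_apply measurableSet_Iio,
    Iio_inter_Ioo, Real.volume_real_Ioo, trunc]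
  simp only [max_def, min_def]
  split_ifs <;> linarith

lemma Hfun_eq_survival (P : Measure Ω) [IsProbabilityMeasure P] {X Y : Ω → ℝ}
    (hX : Measurable X) (hY : Measurable Y) (x y : ℝ) :
    Hfun P X Y x y =
      P.real {ω | x < X ω ∧ y < Y ω} - P.real {ω | x < X ω} * P.real {ω | y < Y ω} := by
  have hA : MeasurableSet {ω | X ω ≤ x} := hX measurableSet_Iic
  have hB : MeasurableSet {ω | Y ω ≤ y} := hY measurableSet_Iic
  have hAB : {ω | x < X ω ∧ y < Y ω} = ({ω | X ω ≤ x} ∪ {ω | Y ω ≤ y})ᶜ := by ext; simp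
  have hA' : {ω | x < X ω} = {ω | X ω ≤ x}ᶜ := by ext; simp
  have hB' : {ω | y < Y ω} = {ω | Y ω ≤ y}ᶜ := by ext; simp
  rw [Hfun, hAB, hA', hB', probReal_compl_eq_one_sub (hA.union hB), probReal_compl_eq_one_sub hA,
    probReal_compl_eq_one_sub hB]
  have hincl := measureReal_union_add_inter (μ := P) (s := {ω | X ω ≤ x}) hB
  rw [← ofPred_and] at hincl
  simp only [measureReal_def] at *
  linear_combination hincl

section ProdSlices

variable {α β : Type*} [MeasurableSpace α] [MeasurableSpace β] (μ : Measure α) (ν : Measure β)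
  [IsFiniteMeasure μ] [IsFiniteMeasure ν]

lemma integral_measureReal_prodMk_left_eq_right {s : Set (α × β)} (hs : MeasurableSet s) :
    ∫ x, ν.real (Prod.mk x ⁻¹' s) ∂μ = ∫ y, μ.real ((·, y) ⁻¹' s) ∂ν := by
  simp only [measureReal_def]
  rw [integral_toReal (measurable_measure_prodMk_left hs).aemeasurable
      (ae_of_all _ fun _ => measure_lt_top _ _),
    integral_toReal (measurable_measure_prodMk_right hs).aemeasurable
      (ae_of_all _ fun _ => measure_lt_top _ _),
    ← Measure.prod_apply hs, Measure.prod_apply_symm hs]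

end ProdSlices

lemma measurable_measureReal_Iio (μ : Measure ℝ) [IsFiniteMeasure μ] :
    Measurable fun t => μ.real (Iio t) :=
  Monotone.measurable fun _ _ h => measureReal_mono (Iio_subset_Iio h)

lemma memLp_measureReal_Iio_comp (P : Measure Ω) [IsFiniteMeasure P] (μ : Measure ℝ)
    [IsFiniteMeasure μ] {X : Ω → ℝ} (hX : Measurable X) (p : ENNReal) :
    MemLp (fun ω => μ.real (Iio (X ω))) p P :=
  MemLp.of_bound ((measurable_measureReal_Iio μ).comp hX).aestronglyMeasurable (μ.real univ)
    (ae_of_all _ fun _ => by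
      rw [Real.norm_of_nonneg measureReal_nonneg]; exact measureReal_mono (subset_univ _))

lemma integral_measureReal_Iio_comp (P : Measure Ω) [IsFiniteMeasure P] (μ : Measure ℝ)
    [IsFiniteMeasure μ] {X : Ω → ℝ} (hX : Measurable X) :
    ∫ ω, μ.real (Iio (X ω)) ∂P = ∫ x, P.real {ω | x < X ω} ∂μ :=
  integral_measureReal_prodMk_left_eq_right P μ (s := {q : Ω × ℝ | q.2 < X q.1})
    (measurableSet_lt measurable_snd (hX.comp measurable_fst))

lemma integral_measureReal_Iio_comp_mul (P : Measure Ω) [IsFiniteMeasure P] (μ ν : Measure ℝ)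
    [IsFiniteMeasure μ] [IsFiniteMeasure ν] {X Y : Ω → ℝ} (hX : Measurable X)
    (hY : Measurable Y) :
    ∫ ω, μ.real (Iio (X ω)) * ν.real (Iio (Y ω)) ∂P
      = ∫ p, P.real {ω | p.1 < X ω ∧ p.2 < Y ω} ∂(μ.prod ν) := by
  simp_rw [← measureReal_prod_prod]
  exact integral_measureReal_prodMk_left_eq_right P (μ.prod ν)
    (s := {q : Ω × (ℝ × ℝ) | q.2.1 < X q.1 ∧ q.2.2 < Y q.1})
    ((measurableSet_lt measurable_snd.fst (hX.comp measurable_fst)).inter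
      (measurableSet_lt measurable_snd.snd (hY.comp measurable_fst)))

theorem cov_measureReal_Iio_comp (P : Measure Ω) [IsProbabilityMeasure P] (μ ν : Measure ℝ)
    [IsFiniteMeasure μ] [IsFiniteMeasure ν] {X Y : Ω → ℝ} (hX : Measurable X)
    (hY : Measurable Y) :
    cov P (fun ω => μ.real (Iio (X ω))) (fun ω => ν.real (Iio (Y ω)))
      = ∫ x, ∫ y, Hfun P X Y x y ∂ν ∂μ := by
  set S := fun p : ℝ × ℝ => P.real {ω | p.1 < X ω ∧ p.2 < Y ω}
  set F := fun x => P.real {ω | x < X ω}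
  set G := fun y => P.real {ω | y < Y ω}
  have hS : Integrable S (μ.prod ν) :=
    Measure.integrable_measure_prodMk_left
      (s := {q : (ℝ × ℝ) × Ω | q.1.1 < X q.2 ∧ q.1.2 < Y q.2})
      ((measurableSet_lt measurable_fst.fst (hX.comp measurable_snd)).inter
        (measurableSet_lt measurable_fst.snd (hY.comp measurable_snd))) (measure_ne_top _ _)
  have hF : Integrable F μ :=
    Measure.integrable_measure_prodMk_left (s := {q : ℝ × Ω | q.1 < X q.2})
      (measurableSet_lt measurable_fst (hX.comp measurable_snd)) (measure_ne_top _ _)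
  have hG : Integrable G ν :=
    Measure.integrable_measure_prodMk_left (s := {q : ℝ × Ω | q.1 < Y q.2})
      (measurableSet_lt measurable_fst (hY.comp measurable_snd)) (measure_ne_top _ _)
  calc cov P (fun ω => μ.real (Iio (X ω))) (fun ω => ν.real (Iio (Y ω)))
      = ∫ p, S p ∂(μ.prod ν) - (∫ x, F x ∂μ) * ∫ y, G y ∂ν := by
        rw [cov, integral_measureReal_Iio_comp_mul P μ ν hX hY,
          integral_measureReal_Iio_comp P μ hX, integral_measureReal_Iio_comp P ν hY]
    _ = ∫ p, (S p - F p.1 * G p.2) ∂(μ.prod ν) := by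
        rw [integral_sub hS (hF.mul_prod hG), integral_prod_mul]
    _ = ∫ x, ∫ y, (S (x, y) - F x * G y) ∂ν ∂μ := integral_prod _ (hS.sub (hF.mul_prod hG))
    _ = ∫ x, ∫ y, Hfun P X Y x y ∂ν ∂μ := by simp only [Hfun_eq_survival P hX hY, S, F, G]

lemma cov_eq_covariance (P : Measure Ω) [IsProbabilityMeasure P] {f g : Ω → ℝ}
    (hf : MemLp f 2 P) (hg : MemLp g 2 P) : cov P f g = cov[f, g; P] :=
  (covariance_eq_sub hf hg).symm

lemma cov_sub_const (P : Measure Ω) [IsProbabilityMeasure P] {f g : Ω → ℝ}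
    (hf : MemLp f 2 P) (hg : MemLp g 2 P) (c d : ℝ) :
    cov P (fun ω => f ω - c) (fun ω => g ω - d) = cov P f g := by
  rw [cov_eq_covariance P (f := fun ω => f ω - c) (g := fun ω => g ω - d)
      (hf.sub (memLp_const c)) (hg.sub (memLp_const d)),
    cov_eq_covariance P hf hg, covariance_sub_const_left (hf.integrable one_le_two),
    covariance_sub_const_right (hg.integrable one_le_two)]

/-- Hoeffding-type formula (Yu's Lemma 3.1 applied to `f_a`):
`Cov(f_a(X_i), f_a(X_j)) = ∫_{−a}^{a}∫_{−a}^{a} H_{(X_i,X_j)}(x,y) dx dy`. -/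
theorem statement7 {Ω : Type*} [MeasurableSpace Ω] (P : Measure Ω) [IsProbabilityMeasure P]
    (Xi Xj : Ω → ℝ) (hmi : Measurable Xi) (hmj : Measurable Xj)
    (a : ℝ) (ha : 0 < a) :
    cov P (fun ω => trunc a (Xi ω)) (fun ω => trunc a (Xj ω))
      = ∫ x in Set.Ioc (-a) a, ∫ y in Set.Ioc (-a) a, Hfun P Xi Xj x y := by
  simp only [trunc_eq_measureReal_Iio_sub ha.le]
  rw [cov_sub_const P (memLp_measureReal_Iio_comp P _ hmi 2)
      (memLp_measureReal_Iio_comp P _ hmj 2),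
    cov_measureReal_Iio_comp P _ _ hmi hmj]

end Paper
end
end
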